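/- arXiv:0901.0660 — 3 statements merged into one kernel-verified Lean document; each statement's English description precedes it below -/
import Mathlib

section
/- Let (L, F) be a filtered cochain complex of abelian groups and let Dec(F) be the shifted filtration defined by Dec(F)^n L^l := { x ∈ F^{n+l} L^l : dx ∈ F^{n+l+1} L^{l+1} }. Then the induced filtrations on cohomology satisfy Dec(F)^n H^l(L) = F^{n+l} H^l(L), where the induced filtration on H^l(L) of a filtration G on L is the image of H^l(G^n L) in H^l(L) (equivalently, classes representable by cocycles in G^n L^l). -/
/-- The extra condition `d x ∈ F^{n+l+1}` in `Dec(F)` is automatic for a cocycle. -/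
theorem setOf_and_map_mem_and_map_eq_zero {M N : Type*} [AddGroup N] (f : M → N) (A : Set M)
    (B : AddSubgroup N) :
    {x | (x ∈ A ∧ f x ∈ B) ∧ f x = 0} = {x | x ∈ A ∧ f x = 0} := by
  ext x
  constructor
  · rintro ⟨⟨hA, -⟩, hzero⟩
    exact ⟨hA, hzero⟩
  · rintro ⟨hA, hzero⟩
    exact ⟨⟨hA, hzero ▸ B.zero_mem⟩, hzero⟩

theorem dec_filtration_on_cohomology_general
    -- the cochain complex of abelian groups
    (L : ℤ → Type*) [∀ l, AddCommGroup (L l)]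
    (d : ∀ l : ℤ, L l →+ L (l + 1))
    -- the decreasing filtration by subcomplexes
    (F : ℤ → ∀ l : ℤ, AddSubgroup (L l))
    -- the shifted filtration `Dec(F)`
    (Dec : ℤ → ∀ l : ℤ, Set (L l))
    (hDec : ∀ n l : ℤ,
      Dec n l = {x : L l | x ∈ F (n + l) l ∧ d l x ∈ F (n + l + 1) (l + 1)}) :
    -- `Dec(F)^n H^{l+1}(L) = F^{n+(l+1)} H^{l+1}(L)` inside `H^{l+1}(L) ⊆ L^{l+1} ⧸ im d`
    ∀ n l : ℤ,
      (QuotientAddGroup.mk (s := (d l).range) ''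
          {x : L (l + 1) | x ∈ Dec n (l + 1) ∧ d (l + 1) x = 0})
      = (QuotientAddGroup.mk (s := (d l).range) ''
          {x : L (l + 1) | x ∈ F (n + (l + 1)) (l + 1) ∧ d (l + 1) x = 0}) := by
  intro n l
  rw [hDec]
  exact congrArg _ (setOf_and_map_mem_and_map_eq_zero (d (l + 1)) _ _)

theorem dec_filtration_on_cohomology
    -- the cochain complex of abelian groups
    (L : ℤ → Type*) [∀ l, AddCommGroup (L l)]
    (d : ∀ l : ℤ, L l →+ L (l + 1))
    (hdd : ∀ (l : ℤ) (x : L l), d (l + 1) (d l x) = 0)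
    -- the decreasing filtration by subcomplexes
    (F : ℤ → ∀ l : ℤ, AddSubgroup (L l))
    (hFdec : ∀ i l : ℤ, F (i + 1) l ≤ F i l)
    (hFd : ∀ (i l : ℤ) (x : L l), x ∈ F i l → d l x ∈ F i (l + 1))
    -- the shifted filtration `Dec(F)`
    (Dec : ℤ → ∀ l : ℤ, Set (L l))
    (hDec : ∀ n l : ℤ,
      Dec n l = {x : L l | x ∈ F (n + l) l ∧ d l x ∈ F (n + l + 1) (l + 1)}) :
    -- `Dec(F)^n H^{l+1}(L) = F^{n+(l+1)} H^{l+1}(L)` inside `H^{l+1}(L) ⊆ L^{l+1} ⧸ im d`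
    ∀ n l : ℤ,
      (QuotientAddGroup.mk (s := (d l).range) ''
          {x : L (l + 1) | x ∈ Dec n (l + 1) ∧ d (l + 1) x = 0})
      = (QuotientAddGroup.mk (s := (d l).range) ''
          {x : L (l + 1) | x ∈ F (n + (l + 1)) (l + 1) ∧ d (l + 1) x = 0}) :=
  dec_filtration_on_cohomology_general L d F Dec hDec
end

section
/- Let L be a cochain complex of abelian groups equipped with two decreasing filtrations P and F by subcomplexes, both finite (exhaustive and eventually zero). Assume that for all integers a, b, r with r ≠ a − b, the cohomology H^r(Gr_P^b Gr_F^a L) vanishes, where Gr_P^b Gr_F^a L = (P^b ∩ F^a)/(P^{b+1} ∩ F^a + P^b ∩ F^{a+1}). Then the induced filtrations on cohomology satisfy P = Dec(F) on H^*(L); that is, for all n and l, P^n H^l(L) = F^{n+l} H^l(L). -/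
/-!
Let `r = l + 1`. A cocycle of `P^n ∩ F^a` with `a < n + r` is written `u + v` with
`v ∈ P^n ∩ F^{a+1}` and `u ∈ P^b ∩ F^a`, `b ≥ n`. Since `a - b < r`, the vanishing of
`H^r(Gr_P^b Gr_F^a)` changes `u`, up to a coboundary, into an element of `P^{b+1} ∩ F^a` plus a
correction in `P^b ∩ F^{a+1}`; as `P` is finite, after finitely many steps the `F`-level has risen
by one. So every class of `P^n H^r` has a representative in `P^n ∩ F^{n+r}`, and symmetrically
(now `a - b > r`) so does every class of `F^{n+r} H^r`.
-/

namespace BifilteredComplex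

variable {L : ℤ → Type*} [∀ l, AddCommGroup (L l)] (d : ∀ l : ℤ, L l →+ L (l + 1))

/-- The kernel of `G^i ∩ H^j → Gr_G^i Gr_H^j`. -/
def grKer (G H : ℤ → ∀ l : ℤ, AddSubgroup (L l)) (i j l : ℤ) : AddSubgroup (L l) :=
  G (i + 1) l ⊓ H j l ⊔ G i l ⊓ H (j + 1) l

lemma grKer_comm (G H : ℤ → ∀ l : ℤ, AddSubgroup (L l)) (i j l : ℤ) :
    grKer G H i j l = grKer H G j i l := by
  rw [grKer, grKer, sup_comm, inf_comm (G (i + 1) l), inf_comm (G i l)]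

/-- `H^{l+1}(Gr_G^i Gr_H^j L) = 0`, stated elementwise. -/
def GrCohomologyVanishes (G H : ℤ → ∀ l : ℤ, AddSubgroup (L l)) (i j l : ℤ) : Prop :=
  ∀ x : L (l + 1), x ∈ G i (l + 1) ⊓ H j (l + 1) →
    d (l + 1) x ∈ grKer G H i j (l + 1 + 1) →
    ∃ y : L l, y ∈ G i l ⊓ H j l ∧ x - d l y ∈ grKer G H i j (l + 1)

variable {d}

lemma GrCohomologyVanishes.symm {G H : ℤ → ∀ l : ℤ, AddSubgroup (L l)} {i j l : ℤ}
    (h : GrCohomologyVanishes d G H i j l) : GrCohomologyVanishes d H G j i l := by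
  intro x hx hdx
  rw [inf_comm] at hx
  rw [← grKer_comm] at hdx ⊢
  obtain ⟨y, hy, hxy⟩ := h x hx hdx
  exact ⟨y, inf_comm (G i l) _ ▸ hy, hxy⟩

variable {G H : ℤ → ∀ l : ℤ, AddSubgroup (L l)} {i0 i j l : ℤ}

lemma GrCohomologyVanishes.exists_decomposition_succ (hvan : GrCohomologyVanishes d G H i j l)
    (hdd : ∀ (l : ℤ) (x : L l), d (l + 1) (d l x) = 0)
    (hGd : ∀ (i l : ℤ) (x : L l), x ∈ G i l → d l x ∈ G i (l + 1))
    (hHd : ∀ (i l : ℤ) (x : L l), x ∈ H i l → d l x ∈ H i (l + 1))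
    (hGi : G i (l + 1) ≤ G i0 (l + 1)) {u v : L (l + 1)}
    (hu : u ∈ G i (l + 1) ⊓ H j (l + 1)) (hv : v ∈ G i0 (l + 1) ⊓ H (j + 1) (l + 1))
    (huv : d (l + 1) (u + v) = 0) :
    ∃ u' ∈ G (i + 1) (l + 1) ⊓ H j (l + 1), ∃ v' ∈ G i0 (l + 1) ⊓ H (j + 1) (l + 1),
      d (l + 1) (u' + v') = 0 ∧ (↑(u' + v') : L (l + 1) ⧸ (d l).range) = ↑(u + v) := by
  obtain ⟨huG, huH⟩ := hu
  obtain ⟨hvG, hvH⟩ := hv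
  have hdu : d (l + 1) u = -d (l + 1) v :=
    eq_neg_of_add_eq_zero_left (by rwa [map_add] at huv)
  have hdu_mem : d (l + 1) u ∈ grKer G H i j (l + 1 + 1) :=
    le_sup_right (a := G (i + 1) _ ⊓ H j _)
      (AddSubgroup.mem_inf.2 ⟨hGd _ _ _ huG, hdu ▸ neg_mem (hHd _ _ _ hvH)⟩)
  obtain ⟨y, -, hy⟩ := hvan u ⟨huG, huH⟩ hdu_mem
  obtain ⟨u', hu', w, ⟨hwG, hwH⟩, hsum⟩ := AddSubgroup.mem_sup.1 hy
  have hsplit : u' + (w + v) = u + v - d l y := by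
    rw [← add_assoc, hsum]
    abel
  refine ⟨u', hu', w + v, ⟨add_mem (hGi hwG) hvG, add_mem hwH hvH⟩, ?_, ?_⟩
  · rw [hsplit, map_sub, huv, hdd, sub_zero]
  · rw [hsplit, QuotientAddGroup.eq_iff_sub_mem, sub_sub_cancel_left]
    exact neg_mem ⟨y, rfl⟩

lemma exists_cohomologous_mem_succ (hdd : ∀ (l : ℤ) (x : L l), d (l + 1) (d l x) = 0)
    (hGdec : ∀ i l : ℤ, G (i + 1) l ≤ G i l)
    (hGd : ∀ (i l : ℤ) (x : L l), x ∈ G i l → d l x ∈ G i (l + 1))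
    (hHd : ∀ (i l : ℤ) (x : L l), x ∈ H i l → d l x ∈ H i (l + 1))
    {M : ℤ} (hGbot : G M (l + 1) = ⊥)
    (hvan : ∀ i, i0 ≤ i → GrCohomologyVanishes d G H i j l)
    {x : L (l + 1)} (hx : x ∈ G i0 (l + 1) ⊓ H j (l + 1)) (hdx : d (l + 1) x = 0) :
    ∃ z ∈ G i0 (l + 1) ⊓ H (j + 1) (l + 1),
      d (l + 1) z = 0 ∧ (z : L (l + 1) ⧸ (d l).range) = x := by
  have hG : Antitone (G · (l + 1)) := antitone_int_of_succ_le fun i ↦ hGdec i (l + 1)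
  suffices ∀ i ≤ max M i0, i0 ≤ i → ∀ u ∈ G i (l + 1) ⊓ H j (l + 1),
      ∀ v ∈ G i0 (l + 1) ⊓ H (j + 1) (l + 1), d (l + 1) (u + v) = 0 →
      ∃ z ∈ G i0 (l + 1) ⊓ H (j + 1) (l + 1),
        d (l + 1) z = 0 ∧ (z : L (l + 1) ⧸ (d l).range) = ↑(u + v) by
    simpa using this i0 (le_max_right M i0) le_rfl x hx 0 (zero_mem _) (by simpa)
  refine Int.leInductionDown ?_ ?_
  · intro _ u hu v hv huv
    obtain rfl : u = 0 := by
      simpa [hGbot] using hG (le_max_left M i0) hu.1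
    exact ⟨v, hv, by simpa using huv, by simp⟩
  · intro i _ ih hi u hu v hv huv
    obtain ⟨u', hu', v', hv', huv', hmk⟩ :=
      (hvan _ hi).exists_decomposition_succ hdd hGd hHd (hG hi) hu hv huv
    rw [sub_add_cancel] at hu'
    obtain ⟨z, hz, hdz, hmkz⟩ := ih (by omega) u' hu' v' hv' huv'
    exact ⟨z, hz, hdz, hmkz.trans hmk⟩

lemma exists_cohomologous_mem_of_le (hdd : ∀ (l : ℤ) (x : L l), d (l + 1) (d l x) = 0)
    (hGdec : ∀ i l : ℤ, G (i + 1) l ≤ G i l)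
    (hGd : ∀ (i l : ℤ) (x : L l), x ∈ G i l → d l x ∈ G i (l + 1))
    (hHd : ∀ (i l : ℤ) (x : L l), x ∈ H i l → d l x ∈ H i (l + 1))
    {M m c : ℤ} (hGbot : G M (l + 1) = ⊥) (hHtop : H m (l + 1) = ⊤) (hmc : m ≤ c)
    (hvan : ∀ i j, i0 ≤ i → j < c → GrCohomologyVanishes d G H i j l)
    {x : L (l + 1)} (hx : x ∈ G i0 (l + 1)) (hdx : d (l + 1) x = 0) :
    ∃ z ∈ G i0 (l + 1) ⊓ H c (l + 1),
      d (l + 1) z = 0 ∧ (z : L (l + 1) ⧸ (d l).range) = x := by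
  induction c, hmc using Int.leInduction with
  | base => exact ⟨x, ⟨hx, hHtop ▸ AddSubgroup.mem_top x⟩, hdx, rfl⟩
  | succ c _ ih =>
    obtain ⟨z, hz, hdz, hmk⟩ := ih fun i j hi hj ↦ hvan i j hi (by omega)
    obtain ⟨z', hz', hdz', hmk'⟩ := exists_cohomologous_mem_succ hdd hGdec hGd hHd hGbot
      (fun i hi ↦ hvan i c hi (by omega)) hz hdz
    exact ⟨z', hz', hdz', hmk'.trans hmk⟩

lemma image_mk_cocycles_eq_inf (hdd : ∀ (l : ℤ) (x : L l), d (l + 1) (d l x) = 0)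
    (hGdec : ∀ i l : ℤ, G (i + 1) l ≤ G i l)
    (hGd : ∀ (i l : ℤ) (x : L l), x ∈ G i l → d l x ∈ G i (l + 1))
    (hHd : ∀ (i l : ℤ) (x : L l), x ∈ H i l → d l x ∈ H i (l + 1))
    {M m c : ℤ} (hGbot : G M (l + 1) = ⊥) (hHtop : H m (l + 1) = ⊤) (hmc : m ≤ c)
    (hvan : ∀ i j, i0 ≤ i → j < c → GrCohomologyVanishes d G H i j l) :
    QuotientAddGroup.mk (s := (d l).range) '' {x | x ∈ G i0 (l + 1) ∧ d (l + 1) x = 0} =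
      QuotientAddGroup.mk '' {x | x ∈ G i0 (l + 1) ⊓ H c (l + 1) ∧ d (l + 1) x = 0} := by
  refine Set.Subset.antisymm ?_ (Set.image_mono fun x hx ↦ ⟨hx.1.1, hx.2⟩)
  rintro _ ⟨x, ⟨hx, hdx⟩, rfl⟩
  obtain ⟨z, hz, hdz, hmk⟩ :=
    exists_cohomologous_mem_of_le hdd hGdec hGd hHd hGbot hHtop hmc hvan hx hdx
  exact ⟨z, ⟨hz, hdz⟩, hmk⟩

end BifilteredComplex

theorem bifiltered_graded_vanishing_implies_P_eq_DecF
    -- the cochain complex of abelian groups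
    (L : ℤ → Type*) [∀ l, AddCommGroup (L l)]
    (d : ∀ l : ℤ, L l →+ L (l + 1))
    (hdd : ∀ (l : ℤ) (x : L l), d (l + 1) (d l x) = 0)
    -- the two decreasing filtrations by subcomplexes
    (P F : ℤ → ∀ l : ℤ, AddSubgroup (L l))
    (hPdec : ∀ i l : ℤ, P (i + 1) l ≤ P i l)
    (hPd : ∀ (i l : ℤ) (x : L l), x ∈ P i l → d l x ∈ P i (l + 1))
    (hFdec : ∀ i l : ℤ, F (i + 1) l ≤ F i l)
    (hFd : ∀ (i l : ℤ) (x : L l), x ∈ F i l → d l x ∈ F i (l + 1))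
    -- finiteness of the filtrations in each degree
    (hPfin : ∀ l : ℤ, ∃ m M : ℤ,
      (∀ b ≤ m, P b l = ⊤) ∧ (∀ b, M ≤ b → P b l = ⊥))
    (hFfin : ∀ l : ℤ, ∃ m M : ℤ,
      (∀ a ≤ m, F a l = ⊤) ∧ (∀ a, M ≤ a → F a l = ⊥))
    -- vanishing of `H^r (Gr_P^b Gr_F^a L)` for `r ≠ a - b`, stated elementwise in degree `l+1`
    (hvanish : ∀ a b l : ℤ, (l + 1 : ℤ) ≠ a - b →
      ∀ x : L (l + 1),
        x ∈ P b (l + 1) ⊓ F a (l + 1) →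
        d (l + 1) x ∈
          ((P (b + 1) (l + 1 + 1) ⊓ F a (l + 1 + 1))
            ⊔ (P b (l + 1 + 1) ⊓ F (a + 1) (l + 1 + 1))) →
        ∃ y : L l, y ∈ P b l ⊓ F a l ∧
          x - d l y ∈
            ((P (b + 1) (l + 1) ⊓ F a (l + 1))
              ⊔ (P b (l + 1) ⊓ F (a + 1) (l + 1)))) :
    -- conclusion: `P^n H^{l+1}(L) = Dec(F)^n H^{l+1}(L) = F^{n+(l+1)} H^{l+1}(L)`
    ∀ n l : ℤ,
      (QuotientAddGroup.mk (s := (d l).range) ''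
          {x : L (l + 1) | x ∈ P n (l + 1) ∧ d (l + 1) x = 0})
      = (QuotientAddGroup.mk (s := (d l).range) ''
          {x : L (l + 1) | x ∈ F (n + (l + 1)) (l + 1) ∧ d (l + 1) x = 0}) := by
  intro n l
  obtain ⟨mP, MP, hPtop, hPbot⟩ := hPfin (l + 1)
  obtain ⟨mF, MF, hFtop, hFbot⟩ := hFfin (l + 1)
  have hgr : ∀ a b, l + 1 ≠ a - b → BifilteredComplex.GrCohomologyVanishes d P F b a l :=
    (hvanish · · l)
  rw [BifilteredComplex.image_mk_cocycles_eq_inf hdd hPdec hPd hFd (hPbot MP le_rfl)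
      (hFtop _ (min_le_left mF (n + (l + 1)))) (min_le_right _ _)
      (fun b a hb ha ↦ hgr a b (by omega)),
    BifilteredComplex.image_mk_cocycles_eq_inf hdd hFdec hFd hPd (hFbot MF le_rfl)
      (hPtop _ (min_le_left mP n)) (min_le_right _ _)
      (fun a b ha hb ↦ (hgr a b (by omega)).symm),
    inf_comm]
end

section
/- Let L be a cochain complex of abelian groups with a finite decreasing filtration F by subcomplexes such that for all a and all r ≠ a, H^r(Gr_F^a L) = 0. Then for every l, the induced filtration F on H^l(L) satisfies: F^a H^l(L) = H^l(L) for a ≤ l and F^a H^l(L) = 0 for a > l; in particular Gr_F^a H^l(L) = 0 unless a = l. -/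
/-!
Since `Gr_F^a L` has cohomology only in degree `a`, a cocycle of degree `r ≠ a` lying in `F^a`
differs by a coboundary from a cocycle lying in `F^{a+1}`. Iterating, every cocycle of degree `r`
(which lies in `F^m = L` for `m ≪ 0`) is cohomologous to one in `F^r`, and a cocycle in `F^a`
with `a > r` is cohomologous to one in `F^M = 0`, i.e. it is a coboundary.
-/

section FilteredComplex

variable {L : ℤ → Type*} [∀ l, AddCommGroup (L l)] (d : ∀ l : ℤ, L l →+ L (l + 1))
  (F : ℤ → ∀ l : ℤ, AddSubgroup (L l))

/-- `H^{l+1}(Gr_F^a L) = 0`, stated elementwise. -/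
def GrCohomologyVanishes (a l : ℤ) : Prop :=
  ∀ x : L (l + 1), x ∈ F a (l + 1) → d (l + 1) x ∈ F (a + 1) (l + 1 + 1) →
    ∃ y : L l, y ∈ F a l ∧ x - d l y ∈ F (a + 1) (l + 1)

variable {d F}

theorem exists_cohomologous_mem_of_le {l : ℤ} (hdd : ∀ x : L l, d (l + 1) (d l x) = 0)
    {b c : ℤ} (hbc : b ≤ c) (hvan : ∀ a, b ≤ a → a < c → GrCohomologyVanishes d F a l)
    {x : L (l + 1)} (hx : x ∈ F b (l + 1)) (hdx : d (l + 1) x = 0) :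
    ∃ x' ∈ F c (l + 1), d (l + 1) x' = 0 ∧
      (QuotientAddGroup.mk x' : L (l + 1) ⧸ (d l).range) = QuotientAddGroup.mk x := by
  induction c, hbc using Int.leInduction with
  | base => exact ⟨x, hx, hdx, rfl⟩
  | succ c hbc ih =>
    obtain ⟨x', hx', hdx', hmk⟩ := ih fun a hba hac => hvan a hba (by omega)
    obtain ⟨y, -, hy⟩ := hvan c hbc (lt_add_one c) x' hx' (by simp [hdx'])
    refine ⟨x' - d l y, hy, by simp [hdx', hdd], ?_⟩
    rw [QuotientAddGroup.mk_sub, (QuotientAddGroup.eq_zero_iff _).2 (AddMonoidHom.mem_range.2 ⟨y, rfl⟩), sub_zero, hmk]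

end FilteredComplex

theorem filtration_with_graded_cohomology_concentrated_general
    -- the cochain complex of abelian groups
    (L : ℤ → Type*) [∀ l, AddCommGroup (L l)]
    (d : ∀ l : ℤ, L l →+ L (l + 1))
    (hdd : ∀ (l : ℤ) (x : L l), d (l + 1) (d l x) = 0)
    -- the decreasing filtration by subcomplexes
    (F : ℤ → ∀ l : ℤ, AddSubgroup (L l))
    -- finiteness (exhaustive and eventually zero) in each degree
    (hFfin : ∀ l : ℤ, ∃ m M : ℤ,
      (∀ a ≤ m, F a l = ⊤) ∧ (∀ a, M ≤ a → F a l = ⊥))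
    -- `H^r(Gr_F^a L) = 0` for `r ≠ a`, stated elementwise in degree `l+1`
    (hvanish : ∀ a l : ℤ, (l + 1 : ℤ) ≠ a →
      ∀ x : L (l + 1),
        x ∈ F a (l + 1) →
        d (l + 1) x ∈ F (a + 1) (l + 1 + 1) →
        ∃ y : L l, y ∈ F a l ∧ x - d l y ∈ F (a + 1) (l + 1)) :
    ∀ a l : ℤ,
      -- `F^a H^{l+1}(L) = H^{l+1}(L)` for `a ≤ l+1`
      (a ≤ l + 1 →
        (QuotientAddGroup.mk (s := (d l).range) ''
            {x : L (l + 1) | x ∈ F a (l + 1) ∧ d (l + 1) x = 0})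
        = (QuotientAddGroup.mk (s := (d l).range) ''
            {x : L (l + 1) | d (l + 1) x = 0}))
      -- and `F^a H^{l+1}(L) = 0` for `a > l+1`
      ∧ (l + 1 < a →
        (QuotientAddGroup.mk (s := (d l).range) ''
            {x : L (l + 1) | x ∈ F a (l + 1) ∧ d (l + 1) x = 0})
        = {(0 : L (l + 1) ⧸ (d l).range)}) := by
  intro a l
  obtain ⟨m, M, hm, hM⟩ := hFfin (l + 1)
  have hvan : ∀ b, l + 1 ≠ b → GrCohomologyVanishes d F b l := fun b hb => hvanish b l hb
  constructor
  · intro hal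
    refine subset_antisymm (Set.image_mono fun x hx => hx.2) ?_
    rintro _ ⟨x, hdx, rfl⟩
    have hx : x ∈ F (min m a) (l + 1) := hm _ (min_le_left m a) ▸ AddSubgroup.mem_top x
    obtain ⟨x', hx', hdx', hmk⟩ := exists_cohomologous_mem_of_le (hdd l) (min_le_right m a)
      (fun b _ hb => hvan b (by omega)) hx hdx
    exact ⟨x', ⟨hx', hdx'⟩, hmk⟩
  · intro hla
    refine Set.eq_singleton_iff_unique_mem.2 ⟨⟨0, ⟨zero_mem _, map_zero _⟩, rfl⟩, ?_⟩
    rintro _ ⟨x, ⟨hx, hdx⟩, rfl⟩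
    obtain ⟨x', hx', -, hmk⟩ := exists_cohomologous_mem_of_le (hdd l) (le_max_right M a)
      (fun b hb _ => hvan b (by omega)) hx hdx
    rw [hM _ (le_max_left M a), AddSubgroup.mem_bot] at hx'
    rw [← hmk, hx', QuotientAddGroup.mk_zero]

theorem filtration_with_graded_cohomology_concentrated
    -- the cochain complex of abelian groups
    (L : ℤ → Type*) [∀ l, AddCommGroup (L l)]
    (d : ∀ l : ℤ, L l →+ L (l + 1))
    (hdd : ∀ (l : ℤ) (x : L l), d (l + 1) (d l x) = 0)
    -- the decreasing filtration by subcomplexes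
    (F : ℤ → ∀ l : ℤ, AddSubgroup (L l))
    (hFdec : ∀ i l : ℤ, F (i + 1) l ≤ F i l)
    (hFd : ∀ (i l : ℤ) (x : L l), x ∈ F i l → d l x ∈ F i (l + 1))
    -- finiteness (exhaustive and eventually zero) in each degree
    (hFfin : ∀ l : ℤ, ∃ m M : ℤ,
      (∀ a ≤ m, F a l = ⊤) ∧ (∀ a, M ≤ a → F a l = ⊥))
    -- `H^r(Gr_F^a L) = 0` for `r ≠ a`, stated elementwise in degree `l+1`
    (hvanish : ∀ a l : ℤ, (l + 1 : ℤ) ≠ a →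
      ∀ x : L (l + 1),
        x ∈ F a (l + 1) →
        d (l + 1) x ∈ F (a + 1) (l + 1 + 1) →
        ∃ y : L l, y ∈ F a l ∧ x - d l y ∈ F (a + 1) (l + 1)) :
    ∀ a l : ℤ,
      -- `F^a H^{l+1}(L) = H^{l+1}(L)` for `a ≤ l+1`
      (a ≤ l + 1 →
        (QuotientAddGroup.mk (s := (d l).range) ''
            {x : L (l + 1) | x ∈ F a (l + 1) ∧ d (l + 1) x = 0})
        = (QuotientAddGroup.mk (s := (d l).range) ''
            {x : L (l + 1) | d (l + 1) x = 0}))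
      -- and `F^a H^{l+1}(L) = 0` for `a > l+1`
      ∧ (l + 1 < a →
        (QuotientAddGroup.mk (s := (d l).range) ''
            {x : L (l + 1) | x ∈ F a (l + 1) ∧ d (l + 1) x = 0})
        = {(0 : L (l + 1) ⧸ (d l).range)}) :=
  filtration_with_graded_cohomology_concentrated_general L d hdd F hFfin hvanish
end
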